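/- arXiv:1811.06423 — 3 statements merged into one kernel-verified Lean document; each statement's English description precedes it below -/
import Mathlib

section
/- There exist positive constants K₁, K₂, K₃ (depending on Ω, φ, n) such that for all u ∈ H₀²(Ω, α), K₁‖u‖²_{H²(Ω,α)} ≤ ∫_Ω (Au)² dα + K₂‖u‖²_{L²(Ω,α)} ≤ K₃‖u‖²_{H²(Ω,α)}, i.e., the bilinear form A(u,u) = ∫_Ω (Au)² dα is coercive on H₀²(Ω, α) modulo an L² term. -/
open MeasureTheory Real Set

noncomputable section

/-- Partial derivative in the `i`-th coordinate direction. -/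
def pd {n : ℕ} (f : EuclideanSpace ℝ (Fin n) → ℝ) (i : Fin n)
    (x : EuclideanSpace ℝ (Fin n)) : ℝ :=
  fderiv ℝ f x (EuclideanSpace.single i 1)

/-- The drift Laplacian `Au = Δu + ∇φ·∇u`. -/
def driftLap {n : ℕ} (φ u : EuclideanSpace ℝ (Fin n) → ℝ)
    (x : EuclideanSpace ℝ (Fin n)) : ℝ :=
  ∑ i, pd (pd u i) i x + ∑ i, pd φ i x * pd u i x

variable {n : ℕ}

lemma pd_contDiff {f : EuclideanSpace ℝ (Fin n) → ℝ} (hf : ContDiff ℝ (⊤ : ℕ∞) f) (i : Fin n) :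
    ContDiff ℝ (⊤ : ℕ∞) (pd f i) :=
  (hf.fderiv_right ((by simp))).clm_apply contDiff_const

lemma pd_hcs {f : EuclideanSpace ℝ (Fin n) → ℝ} (hf : HasCompactSupport f) (i : Fin n) :
    HasCompactSupport (pd f i) :=
  hf.fderiv_apply ℝ (EuclideanSpace.single i 1)

lemma pd_tsupport {f : EuclideanSpace ℝ (Fin n) → ℝ} (i : Fin n) :
    tsupport (pd f i) ⊆ tsupport f := by
  apply closure_minimal _ (isClosed_tsupport f)
  intro x hx
  have : fderiv ℝ f x ≠ 0 := by
    intro h; apply hx; simp [pd, h]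
  exact support_fderiv_subset ℝ (by simpa [Function.mem_support] using this)

lemma pd_eq_zero {f : EuclideanSpace ℝ (Fin n) → ℝ} {i : Fin n}
    {x : EuclideanSpace ℝ (Fin n)} (hx : x ∉ tsupport f) : pd f i x = 0 := by
  by_contra h
  exact hx (pd_tsupport i (subset_closure (by simpa [Function.mem_support] using h)))

lemma pd_mul_exp {f φ : EuclideanSpace ℝ (Fin n) → ℝ} (hf : ContDiff ℝ (⊤ : ℕ∞) f)
    (hφ : ContDiff ℝ (⊤ : ℕ∞) φ) (i : Fin n) (x : EuclideanSpace ℝ (Fin n)) :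
    pd (fun y => f y * rexp (φ y)) i x = (pd f i x + f x * pd φ i x) * rexp (φ x) := by
  have hfd := (hf.differentiable (by simp) x).hasFDerivAt
  have hφd := ((hφ.differentiable (by simp) x).hasFDerivAt).exp
  have h : fderiv ℝ (fun y => f y * rexp (φ y)) x = _ := (hfd.mul hφd).fderiv
  simp only [pd, h]
  simp [ContinuousLinearMap.smul_apply, smul_eq_mul]
  ring

lemma pd_comm {f : EuclideanSpace ℝ (Fin n) → ℝ} (hf : ContDiff ℝ (⊤ : ℕ∞) f) (i j : Fin n)
    (x : EuclideanSpace ℝ (Fin n)) : pd (pd f i) j x = pd (pd f j) i x := by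
  have hf1 : ∀ y, HasFDerivAt f (fderiv ℝ f y) y := fun y =>
    (hf.differentiable (by simp) y).hasFDerivAt
  have hf2 : HasFDerivAt (fderiv ℝ f) (fderiv ℝ (fderiv ℝ f) x) x :=
    (((hf.fderiv_right (m := (⊤ : ℕ∞)) (by simp)).differentiable (by simp)) x).hasFDerivAt
  have hsym := second_derivative_symmetric hf1 hf2 (EuclideanSpace.single i 1)
    (EuclideanSpace.single j 1)
  have comp : ∀ (v w : EuclideanSpace ℝ (Fin n)),
      fderiv ℝ (fun y => fderiv ℝ f y v) x w = fderiv ℝ (fderiv ℝ f) x w v := by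
    intro v w
    have : fderiv ℝ (fun y => fderiv ℝ f y v) x =
        ((fderiv ℝ f x).comp (fderiv ℝ (fun _ : EuclideanSpace ℝ (Fin n) => v) x)) +
          (fderiv ℝ (fderiv ℝ f) x).flip v :=
      fderiv_clm_apply (((hf.fderiv_right (m := (⊤ : ℕ∞)) (by simp)).differentiable (by simp)) x)
        (differentiableAt_const v)
    rw [this]; simp
  show fderiv ℝ (fun y => fderiv ℝ f y (EuclideanSpace.single i 1)) x (EuclideanSpace.single j 1)
      = fderiv ℝ (fun y => fderiv ℝ f y (EuclideanSpace.single j 1)) x (EuclideanSpace.single i 1)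
  rw [comp, comp]
  exact hsym.symm

lemma integ3 {f g : EuclideanSpace ℝ (Fin n) → ℝ} (hf : Continuous f) (hg : Continuous g)
    (hsf : HasCompactSupport f) : Integrable (fun x => f x * g x) :=
  (hf.mul hg).integrable_of_hasCompactSupport (hsf.mul_right)

lemma ibpw {φ f g : EuclideanSpace ℝ (Fin n) → ℝ} (hφ : ContDiff ℝ (⊤ : ℕ∞) φ)
    (hf : ContDiff ℝ (⊤ : ℕ∞) f) (hg : ContDiff ℝ (⊤ : ℕ∞) g) (hsf : HasCompactSupport f) (i : Fin n) :
    ∫ x, f x * pd g i x * rexp (φ x)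
      = - ∫ x, (pd f i x + f x * pd φ i x) * g x * rexp (φ x) := by
  set F := fun x => f x * rexp (φ x) with hF
  have hφe : ContDiff ℝ (⊤ : ℕ∞) (fun x => rexp (φ x)) := Real.contDiff_exp.comp hφ
  have hFc : ContDiff ℝ (⊤ : ℕ∞) F := hf.mul hφe
  have hFs : HasCompactSupport F := hsf.mul_right
  have i1 : Integrable (fun x => fderiv ℝ F x (EuclideanSpace.single i 1) * g x) := by
    exact integ3 (pd_contDiff hFc i).continuous hg.continuous (pd_hcs hFs i)
  have i2 : Integrable (fun x => F x * fderiv ℝ g x (EuclideanSpace.single i 1)) := by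
    exact integ3 hFc.continuous (pd_contDiff hg i).continuous hFs
  have i3 : Integrable (fun x => F x * g x) := integ3 hFc.continuous hg.continuous hFs
  have key := integral_mul_fderiv_eq_neg_fderiv_mul_of_integrable (μ := volume)
      i1 i2 i3 (fun x _ => hFc.differentiable (by simp) x) (fun x _ => hg.differentiable (by simp) x)
  have e1 : ∀ x, f x * pd g i x * rexp (φ x)
      = F x * fderiv ℝ g x (EuclideanSpace.single i 1) := by
    intro x; show _ = (f x * rexp (φ x)) * _; unfold pd; ring
  have e2 : ∀ x, (pd f i x + f x * pd φ i x) * g x * rexp (φ x)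
      = fderiv ℝ F x (EuclideanSpace.single i 1) * g x := by
    intro x
    have : fderiv ℝ F x (EuclideanSpace.single i 1) = pd F i x := rfl
    rw [this, hF, pd_mul_exp hf hφ]; ring
  simp_rw [e1, e2]; exact key

variable {φ u : EuclideanSpace ℝ (Fin n) → ℝ}

lemma hcs_sq {f : EuclideanSpace ℝ (Fin n) → ℝ} (h : HasCompactSupport f) :
    HasCompactSupport (fun x => f x ^ 2) := h.comp_left (g := fun t => t ^ 2) (by simp)

lemma identA (hφ : ContDiff ℝ (⊤ : ℕ∞) φ) (hu : ContDiff ℝ (⊤ : ℕ∞) u) (hcs : HasCompactSupport u) :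
    ∫ x, (∑ i, (pd u i x) ^ 2) * rexp (φ x)
      = - ∫ x, u x * driftLap φ u x * rexp (φ x) := by
  have hcont : ∀ i, Continuous (pd u i) := fun i => (pd_contDiff hu i).continuous
  have hcont2 : ∀ i j, Continuous (pd (pd u i) j) := fun i j =>
    (pd_contDiff (pd_contDiff hu i) j).continuous
  have hφc : ∀ i, Continuous (pd φ i) := fun i => (pd_contDiff hφ i).continuous
  have hec : Continuous (fun x => rexp (φ x)) := Real.continuous_exp.comp hφ.continuous
  have step : ∀ i, ∫ x, (pd u i x) ^ 2 * rexp (φ x)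
      = - ∫ x, (pd (pd u i) i x + pd u i x * pd φ i x) * u x * rexp (φ x) := by
    intro i
    have := ibpw hφ (pd_contDiff hu i) hu (pd_hcs hcs i) i
    simpa [pow_two] using this
  calc ∫ x, (∑ i, (pd u i x) ^ 2) * rexp (φ x)
      = ∫ x, ∑ i, (pd u i x) ^ 2 * rexp (φ x) := by simp_rw [Finset.sum_mul]
    _ = ∑ i, ∫ x, (pd u i x) ^ 2 * rexp (φ x) := by
        apply integral_finset_sum
        intro i _
        exact integ3 ((hcont i).pow 2) hec (hcs_sq (pd_hcs hcs i))
    _ = ∑ i, - ∫ x, (pd (pd u i) i x + pd u i x * pd φ i x) * u x * rexp (φ x) := by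
        exact Finset.sum_congr rfl (fun i _ => step i)
    _ = - ∑ i, ∫ x, (pd (pd u i) i x + pd u i x * pd φ i x) * u x * rexp (φ x) := by
        rw [Finset.sum_neg_distrib]
    _ = - ∫ x, ∑ i, (pd (pd u i) i x + pd u i x * pd φ i x) * u x * rexp (φ x) := by
        rw [← integral_finset_sum]
        intro i _
        exact integ3 (((hcont2 i i).add ((hcont i).mul (hφc i))).mul hu.continuous)
          hec (((pd_hcs (pd_hcs hcs i) i).add ((pd_hcs hcs i).mul_right)).mul_right)
    _ = - ∫ x, u x * driftLap φ u x * rexp (φ x) := by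
        congr 1
        have : (fun x => ∑ i, (pd (pd u i) i x + pd u i x * pd φ i x) * u x * rexp (φ x))
            = fun x => u x * driftLap φ u x * rexp (φ x) := by
          funext x
          simp only [driftLap]
          rw [← Finset.sum_mul, ← Finset.sum_mul, Finset.sum_add_distrib,
            show (∑ i, pd u i x * pd φ i x) = ∑ i, pd φ i x * pd u i x from
              Finset.sum_congr rfl (fun i _ => mul_comm _ _)]
          ring
        rw [this]

lemma integ_mul3 {f g h : EuclideanSpace ℝ (Fin n) → ℝ} (hf : Continuous f) (hg : Continuous g)
    (hh : Continuous h) (hsf : HasCompactSupport f) :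
    Integrable (fun x => f x * g x * h x) :=
  ((hf.mul hg).mul hh).integrable_of_hasCompactSupport ((hsf.mul_right).mul_right)

lemma integ_mul4 {f g h k : EuclideanSpace ℝ (Fin n) → ℝ} (hf : Continuous f)
    (hg : Continuous g) (hh : Continuous h) (hk : Continuous k) (hsf : HasCompactSupport f) :
    Integrable (fun x => f x * g x * h x * k x) :=
  (((hf.mul hg).mul hh).mul hk).integrable_of_hasCompactSupport (hsf.mul_right.mul_right.mul_right)

lemma identB (hφ : ContDiff ℝ (⊤ : ℕ∞) φ) (hu : ContDiff ℝ (⊤ : ℕ∞) u) (hcs : HasCompactSupport u)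
    (i j : Fin n) :
    ∫ x, pd (pd u i) i x * pd (pd u j) j x * rexp (φ x)
      = (∫ x, (pd (pd u i) j x + pd u i x * pd φ j x) * pd (pd u i) j x * rexp (φ x))
        - ∫ x, pd (pd u j) j x * pd φ i x * pd u i x * rexp (φ x) := by
  have hec : Continuous (fun x => rexp (φ x)) := Real.continuous_exp.comp hφ.continuous
  have hc1 : ∀ i, Continuous (pd u i) := fun i => (pd_contDiff hu i).continuous
  have hc2 : ∀ i j, Continuous (pd (pd u i) j) := fun i j =>
    (pd_contDiff (pd_contDiff hu i) j).continuous
  have hc3 : ∀ i j k, Continuous (pd (pd (pd u i) j) k) := fun i j k =>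
    (pd_contDiff (pd_contDiff (pd_contDiff hu i) j) k).continuous
  have hφ1 : ∀ i, Continuous (pd φ i) := fun i => (pd_contDiff hφ i).continuous
  -- first integration by parts
  have h1 := ibpw hφ (pd_contDiff (pd_contDiff hu j) j) (pd_contDiff hu i)
    (pd_hcs (pd_hcs hcs j) j) i
  have e1 : ∀ x, pd (pd u i) i x * pd (pd u j) j x * rexp (φ x)
      = pd (pd u j) j x * pd (pd u i) i x * rexp (φ x) := fun x => by ring
  -- split the RHS of h1
  have esplit : ∀ x, (pd (pd (pd u j) j) i x + pd (pd u j) j x * pd φ i x) * pd u i x * rexp (φ x)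
      = pd (pd (pd u j) j) i x * pd u i x * rexp (φ x)
        + pd (pd u j) j x * pd φ i x * pd u i x * rexp (φ x) := fun x => by ring
  have int1 : Integrable (fun x => pd (pd (pd u j) j) i x * pd u i x * rexp (φ x)) :=
    integ_mul3 (hc3 j j i) (hc1 i) hec (pd_hcs (pd_hcs (pd_hcs hcs j) j) i)
  have int2 : Integrable (fun x => pd (pd u j) j x * pd φ i x * pd u i x * rexp (φ x)) :=
    integ_mul4 (hc2 j j) (hφ1 i) (hc1 i) hec (pd_hcs (pd_hcs hcs j) j)
  -- second integration by parts on the first piece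
  have e2 : ∀ x, pd (pd (pd u j) j) i x * pd u i x * rexp (φ x)
      = pd u i x * pd (pd (pd u j) i) j x * rexp (φ x) := by
    intro x
    rw [show pd (pd (pd u j) j) i x = pd (pd (pd u j) i) j x from
      (pd_comm (pd_contDiff hu j) i j x).symm]
    ring
  have h2 := ibpw hφ (pd_contDiff hu i) (pd_contDiff (pd_contDiff hu j) i)
    (pd_hcs hcs i) j
  have e3 : ∀ x, (pd (pd u i) j x + pd u i x * pd φ j x) * pd (pd u j) i x * rexp (φ x)
      = (pd (pd u i) j x + pd u i x * pd φ j x) * pd (pd u i) j x * rexp (φ x) := by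
    intro x; rw [pd_comm hu j i x]
  -- assemble
  calc ∫ x, pd (pd u i) i x * pd (pd u j) j x * rexp (φ x)
      = ∫ x, pd (pd u j) j x * pd (pd u i) i x * rexp (φ x) := by simp_rw [e1]
    _ = - ∫ x, (pd (pd (pd u j) j) i x + pd (pd u j) j x * pd φ i x) * pd u i x * rexp (φ x) :=
        h1
    _ = - ((∫ x, pd (pd (pd u j) j) i x * pd u i x * rexp (φ x))
          + ∫ x, pd (pd u j) j x * pd φ i x * pd u i x * rexp (φ x)) := by
        rw [← integral_add int1 int2]; simp_rw [esplit]
    _ = - ((- ∫ x, (pd (pd u i) j x + pd u i x * pd φ j x) * pd (pd u i) j x * rexp (φ x))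
          + ∫ x, pd (pd u j) j x * pd φ i x * pd u i x * rexp (φ x)) := by
        congr 2
        calc ∫ x, pd (pd (pd u j) j) i x * pd u i x * rexp (φ x)
            = ∫ x, pd u i x * pd (pd (pd u j) i) j x * rexp (φ x) := by simp_rw [e2]
          _ = - ∫ x, (pd (pd u i) j x + pd u i x * pd φ j x) * pd (pd u j) i x * rexp (φ x) := h2
          _ = - ∫ x, (pd (pd u i) j x + pd u i x * pd φ j x) * pd (pd u i) j x * rexp (φ x) := by
              simp_rw [e3]
    _ = (∫ x, (pd (pd u i) j x + pd u i x * pd φ j x) * pd (pd u i) j x * rexp (φ x))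
        - ∫ x, pd (pd u j) j x * pd φ i x * pd u i x * rexp (φ x) := by ring

lemma pd2_zero {x : EuclideanSpace ℝ (Fin n)} (hx : x ∉ tsupport u) (i j : Fin n) :
    pd (pd u i) j x = 0 :=
  pd_eq_zero (fun h => hx (pd_tsupport i h))

lemma driftLap_zero {x : EuclideanSpace ℝ (Fin n)} (hx : x ∉ tsupport u) :
    driftLap φ u x = 0 := by
  unfold driftLap
  rw [Finset.sum_eq_zero (fun i _ => pd2_zero hx i i),
    Finset.sum_eq_zero (fun i _ => by rw [pd_eq_zero hx, mul_zero]), add_zero]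

lemma hcs_aux {f : EuclideanSpace ℝ (Fin n) → ℝ} (hcs : HasCompactSupport u)
    (h : ∀ x, x ∉ tsupport u → f x = 0) : HasCompactSupport f := by
  have hsub : Function.support f ⊆ tsupport u := fun x hx => by
    by_contra hc; exact hx (h x hc)
  exact IsCompact.of_isClosed_subset hcs (isClosed_tsupport f)
    (closure_minimal hsub (isClosed_tsupport u))

lemma cont_driftLap (hφ : ContDiff ℝ (⊤ : ℕ∞) φ) (hu : ContDiff ℝ (⊤ : ℕ∞) u) :
    Continuous (driftLap φ u) := by
  unfold driftLap
  exact (continuous_finset_sum _ fun i _ =>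
      (pd_contDiff (pd_contDiff hu i) i).continuous).add
    (continuous_finset_sum _ fun i _ =>
      (pd_contDiff hφ i).continuous.mul (pd_contDiff hu i).continuous)

lemma L1 (hφ : ContDiff ℝ (⊤ : ℕ∞) φ) (hu : ContDiff ℝ (⊤ : ℕ∞) u) (hcs : HasCompactSupport u) :
    ∫ x, (∑ i, (pd u i x) ^ 2) * rexp (φ x)
      ≤ (∫ x, (driftLap φ u x) ^ 2 * rexp (φ x))
        + (1/4) * ∫ x, (u x) ^ 2 * rexp (φ x) := by
  have hec : Continuous (fun x => rexp (φ x)) := Real.continuous_exp.comp hφ.continuous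
  have hA : Continuous (driftLap φ u) := cont_driftLap hφ hu
  have hAcs : HasCompactSupport (driftLap φ u) := hcs_aux hcs (fun x hx => driftLap_zero hx)
  have int1 : Integrable (fun x => -(u x * driftLap φ u x * rexp (φ x))) :=
    (integ_mul3 hu.continuous hA hec hcs).neg
  have intA : Integrable (fun x => driftLap φ u x ^ 2 * rexp (φ x)) :=
    integ3 (hA.pow 2) hec (hcs_sq hAcs)
  have intU : Integrable (fun x => u x ^ 2 * rexp (φ x)) :=
    integ3 (hu.continuous.pow 2) hec (hcs_sq hcs)
  have int2 : Integrable (fun x => driftLap φ u x ^ 2 * rexp (φ x)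
      + (1/4) * (u x ^ 2 * rexp (φ x))) := intA.add (intU.const_mul _)
  rw [identA hφ hu hcs]
  have emono : (fun x => -(u x * driftLap φ u x * rexp (φ x)))
      ≤ fun x => driftLap φ u x ^ 2 * rexp (φ x) + (1/4) * (u x ^ 2 * rexp (φ x)) := by
    intro x
    have hw : 0 < rexp (φ x) := Real.exp_pos _
    have : -(u x * driftLap φ u x) ≤ driftLap φ u x ^ 2 + (1/4) * u x ^ 2 := by
      nlinarith [sq_nonneg (driftLap φ u x + u x / 2)]
    nlinarith [this, hw.le, mul_le_mul_of_nonneg_right this hw.le]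
  calc - ∫ x, u x * driftLap φ u x * rexp (φ x)
      = ∫ x, -(u x * driftLap φ u x * rexp (φ x)) := by rw [integral_neg]
    _ ≤ ∫ x, (driftLap φ u x ^ 2 * rexp (φ x) + (1/4) * (u x ^ 2 * rexp (φ x))) :=
        integral_mono int1 int2 emono
    _ = (∫ x, driftLap φ u x ^ 2 * rexp (φ x)) + (1/4) * ∫ x, u x ^ 2 * rexp (φ x) := by
        rw [integral_add intA (intU.const_mul _), integral_const_mul]

set_option maxHeartbeats 1000000 in
lemma L2 (hφ : ContDiff ℝ (⊤ : ℕ∞) φ) (hu : ContDiff ℝ (⊤ : ℕ∞) u) (hcs : HasCompactSupport u)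
    {M : ℝ} (hM : ∀ x ∈ tsupport u, (∑ i, (pd φ i x) ^ 2) ≤ M) (hM1 : 1 ≤ M)
    (hn : 1 ≤ n) :
    ∫ x, (∑ i, ∑ j, (pd (pd u i) j x) ^ 2) * rexp (φ x)
      ≤ 4 * (∫ x, (driftLap φ u x) ^ 2 * rexp (φ x))
        + 8 * (n : ℝ) ^ 2 * M * ∫ x, (∑ i, (pd u i x) ^ 2) * rexp (φ x) := by
  have hec : Continuous (fun x => rexp (φ x)) := Real.continuous_exp.comp hφ.continuous
  have hc1 : ∀ i, Continuous (pd u i) := fun i => (pd_contDiff hu i).continuous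
  have hc2 : ∀ i j, Continuous (pd (pd u i) j) := fun i j =>
    (pd_contDiff (pd_contDiff hu i) j).continuous
  have hφ1 : ∀ i, Continuous (pd φ i) := fun i => (pd_contDiff hφ i).continuous
  have hν : (1:ℝ) ≤ (n:ℝ) := by exact_mod_cast hn
  have hν0 : (0:ℝ) < (n:ℝ) := by linarith
  have hM0 : (0:ℝ) ≤ M := by linarith
  set ν := (n:ℝ) with hνdef
  set Q : Fin n → Fin n → ℝ := fun i j => ∫ x, (pd (pd u i) j x) ^ 2 * rexp (φ x) with hQdef
  set P : Fin n → ℝ := fun i => ∫ x, (pd u i x) ^ 2 * rexp (φ x) with hPdef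
  set A2 : ℝ := ∫ x, (driftLap φ u x) ^ 2 * rexp (φ x) with hA2def
  have intQ : ∀ i j, Integrable (fun x => (pd (pd u i) j x) ^ 2 * rexp (φ x)) := fun i j =>
    integ3 ((hc2 i j).pow 2) hec (hcs_sq (pd_hcs (pd_hcs hcs i) j))
  have intP : ∀ i, Integrable (fun x => (pd u i x) ^ 2 * rexp (φ x)) := fun i =>
    integ3 ((hc1 i).pow 2) hec (hcs_sq (pd_hcs hcs i))
  have hQ0 : ∀ i j, 0 ≤ Q i j := fun i j =>
    integral_nonneg (fun x => mul_nonneg (sq_nonneg _) (Real.exp_pos _).le)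
  have hP0 : ∀ i, 0 ≤ P i := fun i =>
    integral_nonneg (fun x => mul_nonneg (sq_nonneg _) (Real.exp_pos _).le)
  -- the full second-order and first-order integrals as sums
  have hS2 : ∫ x, (∑ i, ∑ j, (pd (pd u i) j x) ^ 2) * rexp (φ x) = ∑ i, ∑ j, Q i j := by
    calc ∫ x, (∑ i, ∑ j, (pd (pd u i) j x) ^ 2) * rexp (φ x)
        = ∫ x, ∑ i, ∑ j, (pd (pd u i) j x) ^ 2 * rexp (φ x) := by
          simp_rw [Finset.sum_mul]
      _ = ∑ i, ∫ x, ∑ j, (pd (pd u i) j x) ^ 2 * rexp (φ x) :=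
          integral_finset_sum _ (fun i _ => integrable_finset_sum _ (fun j _ => intQ i j))
      _ = ∑ i, ∑ j, Q i j :=
          Finset.sum_congr rfl (fun i _ => integral_finset_sum _ (fun j _ => intQ i j))
  have hS1 : ∫ x, (∑ i, (pd u i x) ^ 2) * rexp (φ x) = ∑ i, P i := by
    calc ∫ x, (∑ i, (pd u i x) ^ 2) * rexp (φ x)
        = ∫ x, ∑ i, (pd u i x) ^ 2 * rexp (φ x) := by simp_rw [Finset.sum_mul]
      _ = ∑ i, P i := integral_finset_sum _ (fun i _ => intP i)
  -- lower bound for the X integrals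
  have intX : ∀ i j, Integrable
      (fun x => (pd (pd u i) j x + pd u i x * pd φ j x) * pd (pd u i) j x * rexp (φ x)) :=
    fun i j => integ_mul3 ((hc2 i j).add ((hc1 i).mul (hφ1 j))) (hc2 i j) hec
      (hcs_aux hcs (fun x hx => by rw [pd2_zero hx, pd_eq_zero hx]; ring))
  have hX : ∀ i j, (3/4) * Q i j - M * P i
      ≤ ∫ x, (pd (pd u i) j x + pd u i x * pd φ j x) * pd (pd u i) j x * rexp (φ x) := by
    intro i j
    rw [hQdef, hPdef]
    simp only
    rw [← integral_const_mul, ← integral_const_mul,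
      ← integral_sub ((intQ i j).const_mul _) ((intP i).const_mul _)]
    apply integral_mono (((intQ i j).const_mul _).sub ((intP i).const_mul _)) (intX i j)
    intro x
    simp only [Pi.sub_apply, Pi.add_apply]
    by_cases hx : x ∈ tsupport u
    · have hb : (pd φ j x) ^ 2 ≤ M :=
        le_trans (Finset.single_le_sum (fun k _ => sq_nonneg (pd φ k x))
          (Finset.mem_univ j)) (hM x hx)
      have hw : (0:ℝ) ≤ rexp (φ x) := (Real.exp_pos _).le
      have key : (3/4) * (pd (pd u i) j x) ^ 2 - M * (pd u i x) ^ 2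
          ≤ (pd (pd u i) j x + pd u i x * pd φ j x) * pd (pd u i) j x := by
        nlinarith [sq_nonneg (pd (pd u i) j x / 2 + pd φ j x * pd u i x),
          mul_nonneg (sub_nonneg.mpr hb) (sq_nonneg (pd u i x))]
      nlinarith [mul_le_mul_of_nonneg_right key hw]
    · simp [pd_eq_zero hx, pd2_zero hx]
  -- upper bound for the Y integrals
  have intY : ∀ i j, Integrable
      (fun x => pd (pd u j) j x * pd φ i x * pd u i x * rexp (φ x)) := fun i j =>
    integ_mul4 (hc2 j j) (hφ1 i) (hc1 i) hec (pd_hcs (pd_hcs hcs j) j)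
  have hY : ∀ i j, ∫ x, pd (pd u j) j x * pd φ i x * pd u i x * rexp (φ x)
      ≤ (1/(4*ν)) * Q j j + ν * M * P i := by
    intro i j
    rw [hQdef, hPdef]
    simp only
    rw [← integral_const_mul, ← integral_const_mul,
      ← integral_add ((intQ j j).const_mul _) ((intP i).const_mul _)]
    apply integral_mono (intY i j) (((intQ j j).const_mul _).add ((intP i).const_mul _))
    intro x
    simp only [Pi.sub_apply, Pi.add_apply]
    by_cases hx : x ∈ tsupport u
    · have hb : (pd φ i x) ^ 2 ≤ M :=
        le_trans (Finset.single_le_sum (fun k _ => sq_nonneg (pd φ k x))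
          (Finset.mem_univ i)) (hM x hx)
      have hw : (0:ℝ) ≤ rexp (φ x) := (Real.exp_pos _).le
      have h4 : (0:ℝ) < 4 * ν := by positivity
      set t := pd (pd u j) j x
      set c := pd φ i x
      set s := pd u i x
      have key4 : 4 * ν * (t * c * s) ≤ t ^ 2 + 4 * ν ^ 2 * M * s ^ 2 := by
        nlinarith [sq_nonneg (t - 2 * ν * c * s),
          mul_nonneg (mul_nonneg (sq_nonneg (2 * ν)) (sub_nonneg.mpr hb)) (sq_nonneg s)]
      have key : t * c * s ≤ (1/(4*ν)) * t ^ 2 + ν * M * s ^ 2 := by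
        rw [show (1/(4*ν)) * t ^ 2 + ν * M * s ^ 2 = (t ^ 2 + 4 * ν ^ 2 * M * s ^ 2)/(4*ν) by
          field_simp]
        rw [le_div_iff₀ h4]
        linarith
      nlinarith [mul_le_mul_of_nonneg_right key hw]
    · simp [pd_eq_zero hx, pd2_zero hx]
  -- the Laplacian integral
  have intD : Integrable (fun x => (∑ i, pd (pd u i) i x) ^ 2 * rexp (φ x)) := by
    refine integ3 ((continuous_finset_sum _ fun i _ => hc2 i i).pow 2) hec
      (hcs_aux hcs (fun x hx => ?_))
    rw [Finset.sum_eq_zero (fun i _ => pd2_zero hx i i)]; ring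
  have hD : ∫ x, (∑ i, pd (pd u i) i x) ^ 2 * rexp (φ x)
      = ∑ i, ∑ j, ∫ x, pd (pd u i) i x * pd (pd u j) j x * rexp (φ x) := by
    calc ∫ x, (∑ i, pd (pd u i) i x) ^ 2 * rexp (φ x)
        = ∫ x, ∑ i, ∑ j, pd (pd u i) i x * pd (pd u j) j x * rexp (φ x) := by
          congr 1; funext x
          rw [pow_two, Finset.sum_mul_sum]
          simp_rw [Finset.sum_mul]
      _ = ∑ i, ∑ j, ∫ x, pd (pd u i) i x * pd (pd u j) j x * rexp (φ x) := by
          rw [integral_finset_sum _ (fun i _ => integrable_finset_sum _ (fun j _ =>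
            integ_mul3 (hc2 i i) (hc2 j j) hec (pd_hcs (pd_hcs hcs i) i)))]
          exact Finset.sum_congr rfl (fun i _ => integral_finset_sum _ (fun j _ =>
            integ_mul3 (hc2 i i) (hc2 j j) hec (pd_hcs (pd_hcs hcs i) i)))
  -- identB summed
  have hDsplit : ∫ x, (∑ i, pd (pd u i) i x) ^ 2 * rexp (φ x)
      = (∑ i, ∑ j, ∫ x,
          (pd (pd u i) j x + pd u i x * pd φ j x) * pd (pd u i) j x * rexp (φ x))
        - ∑ i, ∑ j, ∫ x, pd (pd u j) j x * pd φ i x * pd u i x * rexp (φ x) := by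
    rw [hD]
    rw [Finset.sum_congr rfl (fun i _ => Finset.sum_congr rfl (fun j _ =>
      identB hφ hu hcs i j))]
    rw [Finset.sum_congr rfl (fun i (_ : i ∈ Finset.univ) => Finset.sum_sub_distrib _ _),
      Finset.sum_sub_distrib]
  -- upper bound on the Laplacian integral
  have hDup : ∫ x, (∑ i, pd (pd u i) i x) ^ 2 * rexp (φ x)
      ≤ 2 * A2 + 2 * M * ∑ i, P i := by
    have intA : Integrable (fun x => (driftLap φ u x) ^ 2 * rexp (φ x)) :=
      integ3 ((cont_driftLap hφ hu).pow 2) hec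
        (hcs_sq (hcs_aux hcs (fun x hx => driftLap_zero hx)))
    have intS1 : Integrable (fun x => (∑ i, (pd u i x) ^ 2) * rexp (φ x)) := by
      refine integ3 (continuous_finset_sum _ fun i _ => (hc1 i).pow 2) hec
        (hcs_aux hcs (fun x hx => ?_))
      rw [Finset.sum_eq_zero (fun i _ => by rw [pd_eq_zero hx]; ring)]
    have step : ∫ x, (∑ i, pd (pd u i) i x) ^ 2 * rexp (φ x)
        ≤ ∫ x, (2 * ((driftLap φ u x) ^ 2 * rexp (φ x))
            + 2 * M * ((∑ i, (pd u i x) ^ 2) * rexp (φ x))) := by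
      apply integral_mono intD ((intA.const_mul 2).add (intS1.const_mul (2*M)))
      intro x
      dsimp only [Pi.add_apply]
      by_cases hx : x ∈ tsupport u
      · have hw : (0:ℝ) ≤ rexp (φ x) := (Real.exp_pos _).le
        have hCS : (∑ i, pd φ i x * pd u i x) ^ 2
            ≤ (∑ i, (pd φ i x) ^ 2) * ∑ i, (pd u i x) ^ 2 :=
          Finset.sum_mul_sq_le_sq_mul_sq _ _ _
        have hsum0 : (0:ℝ) ≤ ∑ i, (pd u i x) ^ 2 :=
          Finset.sum_nonneg (fun i _ => sq_nonneg _)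
        have hb : (∑ i, pd φ i x * pd u i x) ^ 2 ≤ M * ∑ i, (pd u i x) ^ 2 :=
          le_trans hCS (mul_le_mul_of_nonneg_right (hM x hx) hsum0)
        have hAu : driftLap φ u x = (∑ i, pd (pd u i) i x) + ∑ i, pd φ i x * pd u i x := rfl
        have key : (∑ i, pd (pd u i) i x) ^ 2
            ≤ 2 * (driftLap φ u x) ^ 2 + 2 * M * ∑ i, (pd u i x) ^ 2 := by
          rw [hAu]
          nlinarith [sq_nonneg ((∑ i, pd (pd u i) i x) + 2 * ∑ i, pd φ i x * pd u i x), hb]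
        nlinarith [mul_le_mul_of_nonneg_right key hw]
      · have h0 : ∀ i, pd (pd u i) i x = 0 := fun i => pd2_zero hx i i
        have h1 : ∀ i, pd u i x = 0 := fun i => pd_eq_zero hx
        have hz : driftLap φ u x = 0 := driftLap_zero hx
        rw [Finset.sum_eq_zero (fun i _ => h0 i), hz,
          Finset.sum_eq_zero (fun i _ => by rw [h1 i]; ring)]
        simp
    calc ∫ x, (∑ i, pd (pd u i) i x) ^ 2 * rexp (φ x)
        ≤ ∫ x, (2 * ((driftLap φ u x) ^ 2 * rexp (φ x))
            + 2 * M * ((∑ i, (pd u i x) ^ 2) * rexp (φ x))) := step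
      _ = 2 * A2 + 2 * M * ∑ i, P i := by
          rw [integral_add (intA.const_mul 2) (intS1.const_mul (2*M)),
            integral_const_mul, integral_const_mul, hS1, hA2def]
  -- summing the X and Y bounds
  have hXsum : (3/4) * (∑ i, ∑ j, Q i j) - ν * M * (∑ i, P i)
      ≤ ∑ i, ∑ j, ∫ x,
          (pd (pd u i) j x + pd u i x * pd φ j x) * pd (pd u i) j x * rexp (φ x) := by
    have h := Finset.sum_le_sum (fun i (_ : i ∈ Finset.univ) =>
      Finset.sum_le_sum (fun j (_ : j ∈ Finset.univ) => hX i j))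
    have alg : ∑ i, ∑ j, ((3/4) * Q i j - M * P i)
        = (3/4) * (∑ i, ∑ j, Q i j) - ν * M * (∑ i, P i) := by
      calc ∑ i, ∑ j, ((3/4) * Q i j - M * P i)
          = ∑ i, ((3/4) * ∑ j, Q i j - (n:ℝ) * (M * P i)) :=
            Finset.sum_congr rfl (fun i _ => by
              rw [Finset.sum_sub_distrib, ← Finset.mul_sum, Finset.sum_const,
                Finset.card_univ, Fintype.card_fin, nsmul_eq_mul])
        _ = (3/4) * (∑ i, ∑ j, Q i j) - ν * M * (∑ i, P i) := by
            rw [Finset.sum_sub_distrib, ← Finset.mul_sum, ← Finset.mul_sum,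
              ← Finset.mul_sum, hνdef]
            ring
    linarith [h, alg.symm.le, alg.le]
  have hYsum : ∑ i, ∑ j, ∫ x, pd (pd u j) j x * pd φ i x * pd u i x * rexp (φ x)
      ≤ (1/4) * (∑ i, ∑ j, Q i j) + ν ^ 2 * M * (∑ i, P i) := by
    have h := Finset.sum_le_sum (fun i (_ : i ∈ Finset.univ) =>
      Finset.sum_le_sum (fun j (_ : j ∈ Finset.univ) => hY i j))
    have hdiag : ∑ j, Q j j ≤ ∑ i, ∑ j, Q i j := by
      apply Finset.sum_le_sum
      intro j _
      exact Finset.single_le_sum (fun k _ => hQ0 j k) (Finset.mem_univ j)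
    have alg : ∑ i, ∑ j, ((1/(4*ν)) * Q j j + ν * M * P i)
        = (1/4) * (∑ j, Q j j) + ν ^ 2 * M * (∑ i, P i) := by
      have inner : ∀ i : Fin n, ∑ j, ((1/(4*ν)) * Q j j + ν * M * P i)
          = (1/(4*ν)) * (∑ j, Q j j) + (n:ℝ) * (ν * M * P i) := fun i => by
        rw [Finset.sum_add_distrib, ← Finset.mul_sum, Finset.sum_const,
          Finset.card_univ, Fintype.card_fin, nsmul_eq_mul]
      calc ∑ i, ∑ j, ((1/(4*ν)) * Q j j + ν * M * P i)
          = ∑ i, ((1/(4*ν)) * (∑ j, Q j j) + (n:ℝ) * (ν * M * P i)) :=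
            Finset.sum_congr rfl (fun i _ => inner i)
        _ = (n:ℝ) * ((1/(4*ν)) * (∑ j, Q j j)) + (n:ℝ) * (ν * M * ∑ i, P i) := by
            rw [Finset.sum_add_distrib, Finset.sum_const, Finset.card_univ,
              Fintype.card_fin, nsmul_eq_mul, ← Finset.mul_sum, ← Finset.mul_sum]
        _ = (1/4) * (∑ j, Q j j) + ν ^ 2 * M * (∑ i, P i) := by
            rw [← hνdef]
            field_simp
    have := le_trans h alg.le
    nlinarith [hdiag, this]
  -- put everything together
  rw [hS2, hS1]
  have hfinal := hDsplit ▸ hDup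
  have hT1 : (0:ℝ) ≤ ∑ i, P i := Finset.sum_nonneg (fun i _ => hP0 i)
  have h6 : (0:ℝ) ≤ 6 * ν ^ 2 - 2 * ν - 4 := by nlinarith [hν]
  have h7 : (0:ℝ) ≤ M * (∑ i, P i) * (6 * ν ^ 2 - 2 * ν - 4) :=
    mul_nonneg (mul_nonneg hM0 hT1) h6
  linarith [hXsum, hYsum, hfinal, h7]

set_option maxHeartbeats 1000000 in
lemma L3 (hφ : ContDiff ℝ (⊤ : ℕ∞) φ) (hu : ContDiff ℝ (⊤ : ℕ∞) u) (hcs : HasCompactSupport u)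
    {M : ℝ} (hM : ∀ x ∈ tsupport u, (∑ i, (pd φ i x) ^ 2) ≤ M) :
    ∫ x, (driftLap φ u x) ^ 2 * rexp (φ x)
      ≤ 2 * (n:ℝ) * (∫ x, (∑ i, ∑ j, (pd (pd u i) j x) ^ 2) * rexp (φ x))
        + 2 * M * ∫ x, (∑ i, (pd u i x) ^ 2) * rexp (φ x) := by
  have hec : Continuous (fun x => rexp (φ x)) := Real.continuous_exp.comp hφ.continuous
  have hc1 : ∀ i, Continuous (pd u i) := fun i => (pd_contDiff hu i).continuous
  have hc2 : ∀ i j, Continuous (pd (pd u i) j) := fun i j =>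
    (pd_contDiff (pd_contDiff hu i) j).continuous
  have intA : Integrable (fun x => (driftLap φ u x) ^ 2 * rexp (φ x)) :=
    integ3 ((cont_driftLap hφ hu).pow 2) hec
      (hcs_sq (hcs_aux hcs (fun x hx => driftLap_zero hx)))
  have intS2 : Integrable (fun x => (∑ i, ∑ j, (pd (pd u i) j x) ^ 2) * rexp (φ x)) := by
    refine integ3 (continuous_finset_sum _ fun i _ =>
      continuous_finset_sum _ fun j _ => (hc2 i j).pow 2) hec
      (hcs_aux hcs (fun x hx => ?_))
    rw [Finset.sum_eq_zero (fun i _ => Finset.sum_eq_zero (fun j _ => by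
      rw [pd2_zero hx]; ring))]
  have intS1 : Integrable (fun x => (∑ i, (pd u i x) ^ 2) * rexp (φ x)) := by
    refine integ3 (continuous_finset_sum _ fun i _ => (hc1 i).pow 2) hec
      (hcs_aux hcs (fun x hx => ?_))
    rw [Finset.sum_eq_zero (fun i _ => by rw [pd_eq_zero hx]; ring)]
  have step : ∫ x, (driftLap φ u x) ^ 2 * rexp (φ x)
      ≤ ∫ x, (2 * (n:ℝ) * ((∑ i, ∑ j, (pd (pd u i) j x) ^ 2) * rexp (φ x))
          + 2 * M * ((∑ i, (pd u i x) ^ 2) * rexp (φ x))) := by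
    apply integral_mono intA ((intS2.const_mul _).add (intS1.const_mul _))
    intro x
    dsimp only [Pi.add_apply]
    by_cases hx : x ∈ tsupport u
    · have hw : (0:ℝ) ≤ rexp (φ x) := (Real.exp_pos _).le
      have hCS : (∑ i, pd φ i x * pd u i x) ^ 2
          ≤ (∑ i, (pd φ i x) ^ 2) * ∑ i, (pd u i x) ^ 2 :=
        Finset.sum_mul_sq_le_sq_mul_sq _ _ _
      have hsum0 : (0:ℝ) ≤ ∑ i, (pd u i x) ^ 2 :=
        Finset.sum_nonneg (fun i _ => sq_nonneg _)
      have hb : (∑ i, pd φ i x * pd u i x) ^ 2 ≤ M * ∑ i, (pd u i x) ^ 2 :=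
        le_trans hCS (mul_le_mul_of_nonneg_right (hM x hx) hsum0)
      have ha : (∑ i, pd (pd u i) i x) ^ 2 ≤ (n:ℝ) * ∑ i, (pd (pd u i) i x) ^ 2 := by
        have := sq_sum_le_card_mul_sum_sq (s := Finset.univ)
          (f := fun i => pd (pd u i) i x)
        simpa using this
      have ha2 : ∑ i, (pd (pd u i) i x) ^ 2 ≤ ∑ i, ∑ j, (pd (pd u i) j x) ^ 2 :=
        Finset.sum_le_sum (fun i _ =>
          Finset.single_le_sum (fun k _ => sq_nonneg (pd (pd u i) k x)) (Finset.mem_univ i))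
      have hAu : driftLap φ u x = (∑ i, pd (pd u i) i x) + ∑ i, pd φ i x * pd u i x := rfl
      have key : (driftLap φ u x) ^ 2
          ≤ 2 * (n:ℝ) * (∑ i, ∑ j, (pd (pd u i) j x) ^ 2)
            + 2 * M * ∑ i, (pd u i x) ^ 2 := by
        rw [hAu]
        have hn0 : (0:ℝ) ≤ (n:ℝ) := Nat.cast_nonneg n
        nlinarith [sq_nonneg ((∑ i, pd (pd u i) i x) - ∑ i, pd φ i x * pd u i x), hb, ha,
          mul_le_mul_of_nonneg_left ha2 hn0]
      nlinarith [mul_le_mul_of_nonneg_right key hw]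
    · have hz : driftLap φ u x = 0 := driftLap_zero hx
      rw [hz]
      have h2 : (∑ i, ∑ j, (pd (pd u i) j x) ^ 2) = 0 :=
        Finset.sum_eq_zero (fun i _ => Finset.sum_eq_zero (fun j _ => by
          rw [pd2_zero hx]; ring))
      have h1 : (∑ i, (pd u i x) ^ 2) = 0 :=
        Finset.sum_eq_zero (fun i _ => by rw [pd_eq_zero hx]; ring)
      rw [h1, h2]
      simp
  calc ∫ x, (driftLap φ u x) ^ 2 * rexp (φ x)
      ≤ ∫ x, (2 * (n:ℝ) * ((∑ i, ∑ j, (pd (pd u i) j x) ^ 2) * rexp (φ x))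
          + 2 * M * ((∑ i, (pd u i x) ^ 2) * rexp (φ x))) := step
    _ = 2 * (n:ℝ) * (∫ x, (∑ i, ∑ j, (pd (pd u i) j x) ^ 2) * rexp (φ x))
        + 2 * M * ∫ x, (∑ i, (pd u i x) ^ 2) * rexp (φ x) := by
        rw [integral_add (intS2.const_mul _) (intS1.const_mul _),
          integral_const_mul, integral_const_mul]

set_option maxHeartbeats 1000000 in
/-- coercivity of the weighted clamped plate form modulo an `L²` term,
stated on the dense subspace `C_c^∞(Ω)` of `H₀²(Ω,α)`. -/
theorem stmt2 {n : ℕ} (Ω : Set (EuclideanSpace ℝ (Fin n)))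
    (hΩo : IsOpen Ω) (hΩb : Bornology.IsBounded Ω)
    (φ : EuclideanSpace ℝ (Fin n) → ℝ) (hφ : ContDiff ℝ (⊤ : ℕ∞) φ) :
    ∃ K₁ K₂ K₃ : ℝ, 0 < K₁ ∧ 0 < K₂ ∧ 0 < K₃ ∧
      ∀ u : EuclideanSpace ℝ (Fin n) → ℝ,
        ContDiff ℝ (⊤ : ℕ∞) u → HasCompactSupport u → tsupport u ⊆ Ω →
        (K₁ * ∫ x in Ω,
            ((∑ i, ∑ j, (pd (pd u i) j x) ^ 2) + (∑ i, (pd u i x) ^ 2) + (u x) ^ 2)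
              * Real.exp (φ x)
          ≤ (∫ x in Ω, (driftLap φ u x) ^ 2 * Real.exp (φ x))
            + K₂ * ∫ x in Ω, (u x) ^ 2 * Real.exp (φ x))
        ∧ (∫ x in Ω, (driftLap φ u x) ^ 2 * Real.exp (φ x))
            + K₂ * ∫ x in Ω, (u x) ^ 2 * Real.exp (φ x)
          ≤ K₃ * ∫ x in Ω,
              ((∑ i, ∑ j, (pd (pd u i) j x) ^ 2) + (∑ i, (pd u i x) ^ 2) + (u x) ^ 2)
                * Real.exp (φ x) := by
  -- a uniform bound for the gradient of φ on the closure of Ω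
  obtain ⟨C, hC⟩ := (hΩb.isCompact_closure).exists_bound_of_continuousOn
    (continuous_finset_sum _ fun i _ =>
      ((pd_contDiff hφ i).continuous.pow 2)).continuousOn
  set M : ℝ := max C 0 + 1 with hMdef
  have hM1 : (1:ℝ) ≤ M := by
    have := le_max_right C 0
    simp only [hMdef]
    linarith
  have hM0 : (0:ℝ) ≤ M := by linarith
  have hMb : ∀ x ∈ closure Ω, (∑ i, (pd φ i x) ^ 2) ≤ M := by
    intro x hx
    have := hC x hx
    have h2 : (∑ i, (pd φ i x) ^ 2) ≤ ‖∑ i, (pd φ i x) ^ 2‖ := le_abs_self _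
    have h3 : C ≤ max C 0 := le_max_left _ _
    simp only [hMdef]
    linarith [h2.trans (this.trans h3)]
  rcases Nat.eq_zero_or_pos n with hn0 | hn
  · -- degenerate case n = 0
    subst hn0
    refine ⟨1, 1, 1, one_pos, one_pos, one_pos, fun u hu hcs hsub => ?_⟩
    have hd : ∀ x, driftLap φ u x = 0 := fun x => by simp [driftLap]
    simp only [hd, Finset.univ_eq_empty, Finset.sum_empty, zero_add, one_mul, ne_eq]
    have hz : ∫ x in Ω, (0:ℝ)^2 * rexp (φ x) = 0 := by simp
    rw [hz, zero_add]
    exact ⟨le_refl _, le_refl _⟩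

  · -- main case n ≥ 1
    refine ⟨(8 * (n:ℝ)^2 * M + 5)⁻¹, 1, 2 * (n:ℝ) + 2 * M + 1, by positivity, one_pos,
      by positivity, fun u hu hcs hsub => ?_⟩
    have hxt : ∀ x, x ∉ Ω → x ∉ tsupport u := fun x hx hm => hx (hsub hm)
    have hM' : ∀ x ∈ tsupport u, (∑ i, (pd φ i x) ^ 2) ≤ M := fun x hx =>
      hMb x (subset_closure (hsub hx))
    have hec : Continuous (fun x => rexp (φ x)) := Real.continuous_exp.comp hφ.continuous
    have hc1 : ∀ i, Continuous (pd u i) := fun i => (pd_contDiff hu i).continuous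
    have hc2 : ∀ i j, Continuous (pd (pd u i) j) := fun i j =>
      (pd_contDiff (pd_contDiff hu i) j).continuous
    -- integrability of the three pieces
    have intS2 : Integrable (fun x => (∑ i, ∑ j, (pd (pd u i) j x) ^ 2) * rexp (φ x)) := by
      refine integ3 (continuous_finset_sum _ fun i _ =>
        continuous_finset_sum _ fun j _ => (hc2 i j).pow 2) hec
        (hcs_aux hcs (fun x hx => ?_))
      rw [Finset.sum_eq_zero (fun i _ => Finset.sum_eq_zero (fun j _ => by
        rw [pd2_zero hx]; ring))]
    have intS1 : Integrable (fun x => (∑ i, (pd u i x) ^ 2) * rexp (φ x)) := by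
      refine integ3 (continuous_finset_sum _ fun i _ => (hc1 i).pow 2) hec
        (hcs_aux hcs (fun x hx => ?_))
      rw [Finset.sum_eq_zero (fun i _ => by rw [pd_eq_zero hx]; ring)]
    have intS0 : Integrable (fun x => (u x) ^ 2 * rexp (φ x)) :=
      integ3 (hu.continuous.pow 2) hec (hcs_sq hcs)
    -- convert set integrals to full-space integrals
    have eT : ∫ x in Ω,
        ((∑ i, ∑ j, (pd (pd u i) j x) ^ 2) + (∑ i, (pd u i x) ^ 2) + (u x) ^ 2)
          * Real.exp (φ x)
        = ∫ x, ((∑ i, ∑ j, (pd (pd u i) j x) ^ 2) + (∑ i, (pd u i x) ^ 2) + (u x) ^ 2)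
          * Real.exp (φ x) := by
      apply setIntegral_eq_integral_of_forall_compl_eq_zero
      intro x hx
      rw [Finset.sum_eq_zero (fun i _ => Finset.sum_eq_zero (fun j _ => by
          rw [pd2_zero (hxt x hx)]; ring)),
        Finset.sum_eq_zero (fun i _ => by rw [pd_eq_zero (hxt x hx)]; ring),
        image_eq_zero_of_notMem_tsupport (hxt x hx)]
      ring
    have eA : ∫ x in Ω, (driftLap φ u x) ^ 2 * Real.exp (φ x)
        = ∫ x, (driftLap φ u x) ^ 2 * Real.exp (φ x) := by
      apply setIntegral_eq_integral_of_forall_compl_eq_zero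
      intro x hx
      rw [driftLap_zero (hxt x hx)]
      ring
    have eS0 : ∫ x in Ω, (u x) ^ 2 * Real.exp (φ x)
        = ∫ x, (u x) ^ 2 * Real.exp (φ x) := by
      apply setIntegral_eq_integral_of_forall_compl_eq_zero
      intro x hx
      rw [image_eq_zero_of_notMem_tsupport (hxt x hx)]
      ring
    have intS10 : Integrable (fun x => (∑ i, (pd u i x) ^ 2) * rexp (φ x)
        + (u x) ^ 2 * rexp (φ x)) := intS1.add intS0
    -- split the total integral
    have hI : ∫ x, ((∑ i, ∑ j, (pd (pd u i) j x) ^ 2) + (∑ i, (pd u i x) ^ 2) + (u x) ^ 2)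
          * Real.exp (φ x)
        = (∫ x, (∑ i, ∑ j, (pd (pd u i) j x) ^ 2) * rexp (φ x))
          + (∫ x, (∑ i, (pd u i x) ^ 2) * rexp (φ x))
          + ∫ x, (u x) ^ 2 * rexp (φ x) := by
      rw [show (fun x => ((∑ i, ∑ j, (pd (pd u i) j x) ^ 2) + (∑ i, (pd u i x) ^ 2)
            + (u x) ^ 2) * Real.exp (φ x))
          = fun x => (∑ i, ∑ j, (pd (pd u i) j x) ^ 2) * rexp (φ x)
            + ((∑ i, (pd u i x) ^ 2) * rexp (φ x) + (u x) ^ 2 * rexp (φ x))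
          from funext fun x => by ring,
        integral_add intS2 intS10, integral_add intS1 intS0, ← add_assoc]
    -- the three estimates
    have hL1 := L1 hφ hu hcs
    have hL2 := L2 hφ hu hcs hM' hM1 hn
    have hL3 := L3 hφ hu hcs hM'
    set S2 := ∫ x, (∑ i, ∑ j, (pd (pd u i) j x) ^ 2) * rexp (φ x) with hS2d
    set S1 := ∫ x, (∑ i, (pd u i x) ^ 2) * rexp (φ x) with hS1d
    set S0 := ∫ x, (u x) ^ 2 * rexp (φ x) with hS0d
    set A2 := ∫ x, (driftLap φ u x) ^ 2 * rexp (φ x) with hA2d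
    have hS0n : 0 ≤ S0 := integral_nonneg fun x => mul_nonneg (sq_nonneg _) (Real.exp_pos _).le
    have hS1n : 0 ≤ S1 := integral_nonneg fun x =>
      mul_nonneg (Finset.sum_nonneg fun i _ => sq_nonneg _) (Real.exp_pos _).le
    have hS2n : 0 ≤ S2 := integral_nonneg fun x =>
      mul_nonneg (Finset.sum_nonneg fun i _ => Finset.sum_nonneg fun j _ => sq_nonneg _)
        (Real.exp_pos _).le
    have hA2n : 0 ≤ A2 := integral_nonneg fun x => mul_nonneg (sq_nonneg _) (Real.exp_pos _).le
    rw [eT, eA, eS0, hI]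
    have hC0 : (0:ℝ) ≤ 8 * (n:ℝ)^2 * M := by positivity
    have hCpos : (0:ℝ) < 8 * (n:ℝ)^2 * M + 5 := by positivity
    constructor
    · rw [inv_mul_le_iff₀ hCpos]
      have hmul := mul_le_mul_of_nonneg_left hL1 hC0
      have hCS0 : (0:ℝ) ≤ (8 * (n:ℝ)^2 * M) * S0 := mul_nonneg hC0 hS0n
      have hCA2 : (0:ℝ) ≤ (8 * (n:ℝ)^2 * M) * A2 := mul_nonneg hC0 hA2n
      nlinarith [hL2, hL1, hmul, hCS0, hCA2, hA2n, hS0n]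
    · have h1 : (0:ℝ) ≤ (2 * M + 1) * S2 := by positivity
      have h2 : (0:ℝ) ≤ (2 * (n:ℝ) + 1) * S1 := by positivity
      have h3 : (0:ℝ) ≤ (2 * (n:ℝ) + 2 * M) * S0 := by positivity
      nlinarith [hL3, h1, h2, h3]
end
end

section
/- Let y ∈ C²([0,R]) satisfy y(R) = y'(R) = 0, and either (l = 0 and y'(0) = 0) or (l ≥ 1 and y(0) = 0). Then with k = l(l+n-2), the k-dependent part of the clamped-plate quadratic form satisfies ∫₀^R ( -2k y y''/r² - (2k/r³)(n-1+rφ') y y' + k² y²/r⁴ ) r^{n-1} e^{φ(r)} dr = ∫₀^R ( (k²-2k) y²/r⁴ + (2k/r⁴)(y - r y')² ) r^{n-1} e^{φ(r)} dr. -/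
open MeasureTheory Real Set Filter Topology

noncomputable section

lemma aux_integral_add {g h : ℝ → ℝ} {μ : Measure ℝ} (hh : Integrable h μ)
    (h0 : ∫ x, h x ∂μ = 0) : ∫ x, (g x + h x) ∂μ = ∫ x, g x ∂μ := by
  by_cases hg : Integrable g μ
  · rw [integral_add hg hh, h0, add_zero]
  · rw [integral_undef hg, integral_undef]
    intro H
    have : Integrable (fun x => (g x + h x) - h x) μ := H.sub hh
    exact hg (this.congr (by filter_upwards with x; ring))

lemma aux_not_integrable {δ c : ℝ} (hδ : 0 < δ) (hc : 0 < c) (f : ℝ → ℝ)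
    (hbound : ∀ r ∈ Ioo (0:ℝ) δ, c * r⁻¹ ≤ ‖f r‖) : ¬ IntegrableOn f (Ioo (0:ℝ) δ) := by
  intro H
  have h1 : IntegrableOn (fun r : ℝ => c * r⁻¹) (Ioo (0:ℝ) δ) := by
    refine Integrable.mono H ((measurable_const.mul measurable_inv).aestronglyMeasurable) ?_
    filter_upwards [ae_restrict_mem measurableSet_Ioo] with r hr
    have h2 : c * r⁻¹ ≤ ‖f r‖ := hbound r hr
    have : (0:ℝ) ≤ c * r⁻¹ := by
      have := hr.1
      positivity
    rw [Real.norm_eq_abs, abs_of_nonneg this]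
    exact h2
  have h3 : IntegrableOn (fun x : ℝ => x ^ (-1:ℝ)) (Ioo (0:ℝ) δ) := by
    have h4 : IntegrableOn (fun x : ℝ => c⁻¹ * (c * x⁻¹)) (Ioo (0:ℝ) δ) := h1.const_mul c⁻¹
    refine h4.congr_fun ?_ measurableSet_Ioo
    intro x hx
    have hx0 : x ≠ 0 := ne_of_gt hx.1
    show c⁻¹ * (c * x⁻¹) = x ^ (-1:ℝ)
    rw [Real.rpow_neg_one]
    field_simp
  rw [intervalIntegral.integrableOn_Ioo_rpow_iff hδ] at h3
  linarith

lemma aux_bad {R : ℝ} (hR : 0 < R) (F q B : ℝ → ℝ) {L c : ℝ}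
    (hFS : ∀ r ∈ Ioo (0:ℝ) R, F r = q r * r⁻¹ + B r)
    (hq : Tendsto q (𝓝[>] (0:ℝ)) (𝓝 L)) (hL : L ≠ 0) (hc : 0 < c)
    (hB : ∀ᶠ r in 𝓝[>] (0:ℝ), ‖B r‖ ≤ c) : ¬ IntegrableOn F (Ioo (0:ℝ) R) := by
  have hL2 : 0 < ‖L‖ := norm_pos_iff.mpr hL
  have e1 : ∀ᶠ r in 𝓝[>] (0:ℝ), ‖L‖/2 < ‖q r‖ :=
    Tendsto.eventually_const_lt (by linarith) hq.norm
  have e2 : Ioo (0:ℝ) (min R (‖L‖/(4*c))) ∈ 𝓝[>] (0:ℝ) :=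
    Ioo_mem_nhdsGT (by positivity)
  have e3 : ∀ᶠ r in 𝓝[>] (0:ℝ),
      (‖L‖/2 < ‖q r‖ ∧ ‖B r‖ ≤ c) ∧ r ∈ Ioo (0:ℝ) (min R (‖L‖/(4*c))) :=
    (e1.and hB).and (eventually_of_mem e2 (fun r hr => hr))
  obtain ⟨u, hu, hsub⟩ := mem_nhdsGT_iff_exists_Ioo_subset.mp e3
  have hδ : 0 < min u R := lt_min hu hR
  intro H
  have key : ∀ r ∈ Ioo (0:ℝ) (min u R), (‖L‖/4) * r⁻¹ ≤ ‖F r‖ := by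
    intro r hr
    have hr0 : 0 < r := hr.1
    obtain ⟨⟨h1, h2⟩, h3⟩ := hsub ⟨hr.1, lt_of_lt_of_le hr.2 (min_le_left _ _)⟩
    have hrR : r < R := lt_of_lt_of_le h3.2 (min_le_left _ _)
    have hrc : r < ‖L‖/(4*c) := lt_of_lt_of_le h3.2 (min_le_right _ _)
    have hFr : F r = q r * r⁻¹ + B r := hFS r ⟨hr0, hrR⟩
    have hinv : 0 < r⁻¹ := by positivity
    have hcr : c ≤ (‖L‖/4) * r⁻¹ := by
      have h5 : r * (4*c) < ‖L‖ := (lt_div_iff₀ (by positivity)).mp hrc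
      have h6 : c * r ≤ ‖L‖/4 := by linarith
      have h7 : (c * r) * r⁻¹ ≤ (‖L‖/4) * r⁻¹ := mul_le_mul_of_nonneg_right h6 (le_of_lt hinv)
      have h8 : (c * r) * r⁻¹ = c := by field_simp
      linarith
    have hlow : (‖L‖/2) * r⁻¹ ≤ ‖q r * r⁻¹‖ := by
      rw [norm_mul, norm_inv, Real.norm_eq_abs (r), abs_of_pos hr0]
      apply mul_le_mul_of_nonneg_right (le_of_lt h1)
      positivity
    have htri : ‖q r * r⁻¹‖ - ‖B r‖ ≤ ‖q r * r⁻¹ + B r‖ := by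
      have h7 := norm_sub_norm_le (q r * r⁻¹) (-(B r))
      simp only [sub_neg_eq_add, norm_neg] at h7
      linarith
    rw [hFr]
    have : (‖L‖/4) * r⁻¹ ≤ (‖L‖/2) * r⁻¹ - c := by
      have : (‖L‖/4) * r⁻¹ + c ≤ (‖L‖/4) * r⁻¹ + (‖L‖/4) * r⁻¹ := by linarith
      have h8 : (‖L‖/4) * r⁻¹ + (‖L‖/4) * r⁻¹ = (‖L‖/2) * r⁻¹ := by ring
      linarith
    linarith
  exact aux_not_integrable hδ (by positivity) F key
    (H.mono_set (Ioo_subset_Ioo le_rfl (min_le_right u R)))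

set_option maxHeartbeats 2000000 in
/-- integration-by-parts identity for the `k`-dependent part of the
clamped-plate quadratic form, `k = l(l+n-2)`. -/
theorem stmt6 (n l : ℕ) (hn : 2 ≤ n)
    (φ : ℝ → ℝ) (hφ : ContDiff ℝ (⊤ : ℕ∞) φ)
    (hφeven : ∀ x, φ (-x) = φ x) (hφconv : ConvexOn ℝ univ φ)
    (R : ℝ) (hR : 0 < R)
    (y : ℝ → ℝ) (hy : ContDiff ℝ 2 y)
    (hyR : y R = 0) (hy'R : deriv y R = 0)
    (h0 : (l = 0 ∧ deriv y 0 = 0) ∨ (1 ≤ l ∧ y 0 = 0))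
    (k : ℝ) (hk : k = (l : ℝ) * ((l : ℝ) + (n : ℝ) - 2)) :
    ∫ r in Ioo (0 : ℝ) R,
        (-(2 * k) / r ^ 2 * y r * deriv (deriv y) r
          - (2 * k) / r ^ 3 * (((n : ℝ) - 1) + r * deriv φ r) * y r * deriv y r
          + k ^ 2 / r ^ 4 * (y r) ^ 2) * r ^ (n - 1) * Real.exp (φ r)
      = ∫ r in Ioo (0 : ℝ) R,
          ((k ^ 2 - 2 * k) / r ^ 4 * (y r) ^ 2
            + (2 * k) / r ^ 4 * (y r - r * deriv y r) ^ 2) * r ^ (n - 1)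
              * Real.exp (φ r) := by
  -- regularity facts
  have hy1 : Differentiable ℝ y := hy.differentiable two_ne_zero
  have hy2 : ContDiff ℝ (1+1) y := by norm_num; exact hy
  have hdy : ContDiff ℝ 1 (deriv y) := (contDiff_succ_iff_deriv.mp hy2).2.2
  have cy : Continuous y := hy.continuous
  have cdy : Continuous (deriv y) := hdy.continuous
  have hdy1 : Differentiable ℝ (deriv y) := hdy.differentiable one_ne_zero
  have cddy : Continuous (deriv (deriv y)) := (contDiff_one_iff_deriv.mp hdy).2
  have hphiInf : ContDiff ℝ (⊤ : ℕ∞) φ := hφ.of_le (by simp)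
  have hφ1 : Differentiable ℝ φ := hphiInf.differentiable (by simp)
  have cφ : Continuous φ := hφ.continuous
  have cdφ : Continuous (deriv φ) := ((contDiff_infty_iff_deriv.mp hphiInf).2).continuous
  rcases h0 with ⟨hl0, hy'0⟩ | ⟨hl1, hy0⟩
  · -- case l = 0 : k = 0 and both integrands vanish
    have hk0 : k = 0 := by simp [hk, hl0]
    rw [hk0]
    norm_num
  · -- case 1 ≤ l
    have hl1' : (1:ℝ) ≤ (l:ℝ) := by exact_mod_cast hl1
    have hn' : (2:ℝ) ≤ (n:ℝ) := by exact_mod_cast hn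
    have hk1 : 1 ≤ k := by nlinarith [hk]
    have hkpos : 0 < k := by linarith
    -- the slope function y r / r tends to deriv y 0
    have hs : Tendsto (fun r : ℝ => y r / r) (𝓝[>] (0:ℝ)) (𝓝 (deriv y 0)) := by
      have h1 : HasDerivAt y (deriv y 0) 0 := (hy1 0).hasDerivAt
      have h2 := hasDerivAt_iff_tendsto_slope.mp h1
      have h3 : 𝓝[>] (0:ℝ) ≤ 𝓝[≠] (0:ℝ) :=
        nhdsWithin_mono _ (fun x hx => ne_of_gt hx)
      refine (h2.mono_left h3).congr ?_
      intro r
      simp [slope_def_field, hy0, div_eq_mul_inv]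
    have hid : Tendsto (fun r : ℝ => r) (𝓝[>] (0:ℝ)) (𝓝 0) :=
      tendsto_id.mono_left nhdsWithin_le_nhds
    have hsr : Tendsto (fun r : ℝ => (y r / r, r)) (𝓝[>] (0:ℝ)) (𝓝 (deriv y 0, 0)) :=
      hs.prodMk_nhds hid
    by_cases hbad : n = 2 ∧ deriv y 0 ≠ 0
    · -- bad case: both sides are non-integrable, hence both integrals are 0
      obtain ⟨hn2, hdy0⟩ := hbad
      subst hn2
      have hkl : k = (l:ℝ) * (l:ℝ) := by rw [hk]; push_cast; ring
      have hll : l * l ≠ 2 := by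
        rcases Nat.lt_or_ge l 2 with hl2 | hl2
        · interval_cases l <;> omega
        · nlinarith
      have hkne2 : k ≠ 2 := by
        intro hc
        apply hll
        have : ((l * l : ℕ) : ℝ) = 2 := by push_cast; rw [← hkl, hc]
        exact_mod_cast this
      have hk2 : k^2 - 2*k ≠ 0 := by
        have : k^2 - 2*k = k * (k - 2) := by ring
        rw [this]
        exact mul_ne_zero (ne_of_gt hkpos) (sub_ne_zero.mpr hkne2)
      have hE : Real.exp (φ 0) ≠ 0 := Real.exp_ne_zero _
      -- LHS integrand
      set qf : ℝ → ℝ := fun r =>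
        (k^2 * (y r / r)^2 - 2*k*(y r / r)*deriv y r) * Real.exp (φ r) with hqf
      set Bf : ℝ → ℝ := fun r =>
        (-(2*k)*(y r / r)*deriv (deriv y) r
          - 2*k*deriv φ r*((y r / r)*deriv y r)) * Real.exp (φ r) with hBf
      have hqftend : Tendsto qf (𝓝[>] (0:ℝ))
          (𝓝 ((k^2 * (deriv y 0)^2 - 2*k*(deriv y 0)*deriv y 0) * Real.exp (φ 0))) := by
        have hψ : Continuous (fun p : ℝ × ℝ =>
            (k^2 * p.1^2 - 2*k*p.1*deriv y p.2) * Real.exp (φ p.2)) := by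
          have := cdy; have := cφ
          fun_prop
        have ht := (hψ.tendsto (deriv y 0, 0)).comp hsr
        refine Tendsto.congr' ?_ ht
        filter_upwards with r
        simp only [hqf, Function.comp]
      have hBftend : Tendsto Bf (𝓝[>] (0:ℝ))
          (𝓝 ((-(2*k)*(deriv y 0)*deriv (deriv y) 0
            - 2*k*deriv φ 0*((deriv y 0)*deriv y 0)) * Real.exp (φ 0))) := by
        have hψ : Continuous (fun p : ℝ × ℝ =>
            (-(2*k)*p.1*deriv (deriv y) p.2
              - 2*k*deriv φ p.2*(p.1*deriv y p.2)) * Real.exp (φ p.2)) := by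
          have := cdy; have := cddy; have := cdφ; have := cφ
          fun_prop
        have ht := (hψ.tendsto (deriv y 0, 0)).comp hsr
        refine Tendsto.congr' ?_ ht
        filter_upwards with r
        simp only [hBf, Function.comp]
      set Mf := (-(2*k)*(deriv y 0)*deriv (deriv y) 0
            - 2*k*deriv φ 0*((deriv y 0)*deriv y 0)) * Real.exp (φ 0) with hMf
      have hBfbd : ∀ᶠ r in 𝓝[>] (0:ℝ), ‖Bf r‖ ≤ ‖Mf‖ + 1 := by
        filter_upwards [Tendsto.eventually_lt_const (lt_add_one ‖Mf‖) hBftend.norm] with r hr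
        exact le_of_lt hr
      have hLf : (k^2 * (deriv y 0)^2 - 2*k*(deriv y 0)*deriv y 0) * Real.exp (φ 0) ≠ 0 := by
        have he : k^2 * (deriv y 0)^2 - 2*k*(deriv y 0)*deriv y 0
            = (k^2 - 2*k) * (deriv y 0)^2 := by ring
        rw [he]
        exact mul_ne_zero (mul_ne_zero hk2 (pow_ne_zero 2 hdy0)) hE
      have hFSf : ∀ r ∈ Ioo (0:ℝ) R,
          (-(2 * k) / r ^ 2 * y r * deriv (deriv y) r
            - (2 * k) / r ^ 3 * ((((2:ℕ) : ℝ) - 1) + r * deriv φ r) * y r * deriv y r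
            + k ^ 2 / r ^ 4 * (y r) ^ 2) * r ^ (2 - 1) * Real.exp (φ r)
          = qf r * r⁻¹ + Bf r := by
        intro r hr
        have hr0 : r ≠ 0 := ne_of_gt hr.1
        simp only [hqf, hBf, show (2-1 : ℕ) = 1 from rfl, pow_one]
        field_simp
        ring
      have hnif : ¬ IntegrableOn (fun r : ℝ =>
          (-(2 * k) / r ^ 2 * y r * deriv (deriv y) r
            - (2 * k) / r ^ 3 * ((((2:ℕ) : ℝ) - 1) + r * deriv φ r) * y r * deriv y r
            + k ^ 2 / r ^ 4 * (y r) ^ 2) * r ^ (2 - 1) * Real.exp (φ r)) (Ioo (0:ℝ) R) :=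
        aux_bad hR _ qf Bf hFSf hqftend hLf (by positivity) hBfbd
      -- RHS integrand
      set qg : ℝ → ℝ := fun r =>
        ((k^2 - 2*k) * (y r / r)^2 + 2*k*(y r / r - deriv y r)^2) * Real.exp (φ r) with hqg
      have hqgtend : Tendsto qg (𝓝[>] (0:ℝ))
          (𝓝 (((k^2 - 2*k) * (deriv y 0)^2 + 2*k*(deriv y 0 - deriv y 0)^2)
            * Real.exp (φ 0))) := by
        have hψ : Continuous (fun p : ℝ × ℝ =>
            ((k^2 - 2*k) * p.1^2 + 2*k*(p.1 - deriv y p.2)^2) * Real.exp (φ p.2)) := by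
          have := cdy; have := cφ
          fun_prop
        have ht := (hψ.tendsto (deriv y 0, 0)).comp hsr
        refine Tendsto.congr' ?_ ht
        filter_upwards with r
        simp only [hqg, Function.comp]
      have hLg : ((k^2 - 2*k) * (deriv y 0)^2 + 2*k*(deriv y 0 - deriv y 0)^2)
          * Real.exp (φ 0) ≠ 0 := by
        have he : (k^2 - 2*k) * (deriv y 0)^2 + 2*k*(deriv y 0 - deriv y 0)^2
            = (k^2 - 2*k) * (deriv y 0)^2 := by ring
        rw [he]
        exact mul_ne_zero (mul_ne_zero hk2 (pow_ne_zero 2 hdy0)) hE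
      have hFSg : ∀ r ∈ Ioo (0:ℝ) R,
          ((k ^ 2 - 2 * k) / r ^ 4 * (y r) ^ 2
            + (2 * k) / r ^ 4 * (y r - r * deriv y r) ^ 2) * r ^ (2 - 1) * Real.exp (φ r)
          = qg r * r⁻¹ + (fun _ : ℝ => (0:ℝ)) r := by
        intro r hr
        have hr0 : r ≠ 0 := ne_of_gt hr.1
        simp only [hqg, show (2-1 : ℕ) = 1 from rfl, pow_one]
        field_simp
        ring
      have hnig : ¬ IntegrableOn (fun r : ℝ =>
          ((k ^ 2 - 2 * k) / r ^ 4 * (y r) ^ 2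
            + (2 * k) / r ^ 4 * (y r - r * deriv y r) ^ 2) * r ^ (2 - 1)
              * Real.exp (φ r)) (Ioo (0:ℝ) R) :=
        aux_bad hR _ qg (fun _ => (0:ℝ)) hFSg hqgtend hLg one_pos
          (by filter_upwards with r; simp)
      rw [integral_undef hnif, integral_undef hnig]
    · -- good case
      push_neg at hbad
      set G : ℝ → ℝ := fun r => (-2*k) * (y r * deriv y r * Real.exp (φ r) * r ^ ((n:ℤ)-3))
        with hG
      set h : ℝ → ℝ := fun r => (-2*k) * (((deriv y r)^2 + y r * deriv (deriv y) r
          + deriv φ r * (y r * deriv y r)) * r ^ ((n:ℤ)-3)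
          + ((n:ℝ)-3) * (y r * deriv y r) * r ^ ((n:ℤ)-4)) * Real.exp (φ r) with hh
      have hGderiv : ∀ r ∈ Ioo (0:ℝ) R, HasDerivAt G (h r) r := by
        intro r hr
        have hr0 : r ≠ 0 := ne_of_gt hr.1
        have Hy : HasDerivAt y (deriv y r) r := (hy1 r).hasDerivAt
        have Hdy : HasDerivAt (deriv y) (deriv (deriv y) r) r := (hdy1 r).hasDerivAt
        have Hφ : HasDerivAt φ (deriv φ r) r := (hφ1 r).hasDerivAt
        have He : HasDerivAt (fun s => Real.exp (φ s)) (Real.exp (φ r) * deriv φ r) r := Hφ.exp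
        have Hz : HasDerivAt (fun s : ℝ => s ^ ((n:ℤ)-3))
            ((((n:ℤ)-3 : ℤ) : ℝ) * r ^ ((n:ℤ)-3-1)) r := hasDerivAt_zpow _ _ (Or.inl hr0)
        have H := (((Hy.mul Hdy).mul He).mul Hz).const_mul (-2*k)
        refine H.congr_deriv ?_
        rw [hh]
        rw [show ((n:ℤ)-3-1) = (n:ℤ)-4 by ring]
        push_cast
        simp only [Pi.mul_apply]
        ring
      have key : ∀ r ∈ Ioo (0:ℝ) R,
          (-(2 * k) / r ^ 2 * y r * deriv (deriv y) r
            - (2 * k) / r ^ 3 * (((n : ℝ) - 1) + r * deriv φ r) * y r * deriv y r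
            + k ^ 2 / r ^ 4 * (y r) ^ 2) * r ^ (n - 1) * Real.exp (φ r)
          = (((k ^ 2 - 2 * k) / r ^ 4 * (y r) ^ 2
              + (2 * k) / r ^ 4 * (y r - r * deriv y r) ^ 2) * r ^ (n - 1)
                * Real.exp (φ r)) + h r := by
        intro r hr
        have hr0 : r ≠ 0 := ne_of_gt hr.1
        have e1 : r ^ (n-1) = r ^ (n-2) * r := by
          rw [← pow_succ]
          congr 1
          omega
        have e2 : r ^ ((n:ℤ)-3) = r ^ (n-2) / r := by
          rw [show ((n:ℤ)-3) = ((n-2:ℕ):ℤ) + (-1) by omega, zpow_add₀ hr0, zpow_natCast,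
            zpow_neg_one, div_eq_mul_inv]
        have e3 : r ^ ((n:ℤ)-4) = r ^ (n-2) / r^2 := by
          rw [show ((n:ℤ)-4) = ((n-2:ℕ):ℤ) + (-2) by omega, zpow_add₀ hr0, zpow_natCast]
          rw [show ((-2:ℤ)) = -(2:ℕ) by norm_num, zpow_neg, zpow_natCast, div_eq_mul_inv]
        rw [hh]
        simp only [e1, e2, e3]
        field_simp
        ring
      -- continuity of h away from 0
      have hcont : ContinuousOn h (Ioi (0:ℝ)) := by
        intro r hr
        have hr0 : r ≠ 0 := ne_of_gt hr
        apply ContinuousAt.continuousWithinAt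
        have c1 : ContinuousAt (fun s : ℝ => s ^ ((n:ℤ)-3)) r :=
          continuousAt_zpow₀ _ _ (Or.inl hr0)
        have c2 : ContinuousAt (fun s : ℝ => s ^ ((n:ℤ)-4)) r :=
          continuousAt_zpow₀ _ _ (Or.inl hr0)
        rw [hh]
        exact (continuousAt_const.mul
          (((((cdy.continuousAt.pow 2).add
              (cy.continuousAt.mul cddy.continuousAt)).add
              (cdφ.continuousAt.mul (cy.continuousAt.mul cdy.continuousAt))).mul c1).add
            ((continuousAt_const.mul (cy.continuousAt.mul cdy.continuousAt)).mul c2))).mul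
          (Real.continuous_exp.continuousAt.comp cφ.continuousAt)
      -- limits at 0⁺
      have hlim : Tendsto G (𝓝[>] (0:ℝ)) (𝓝 0) ∧
          ∃ L, Tendsto h (𝓝[>] (0:ℝ)) (𝓝 L) := by
        rcases Nat.lt_or_ge n 3 with hn3 | hn3
        · -- n = 2, deriv y 0 = 0
          have hn2 : n = 2 := by omega
          have hdy0 : deriv y 0 = 0 := hbad hn2
          have hs2 : Tendsto (fun r : ℝ => deriv y r / r) (𝓝[>] (0:ℝ))
              (𝓝 (deriv (deriv y) 0)) := by
            have h1 : HasDerivAt (deriv y) (deriv (deriv y) 0) 0 := (hdy1 0).hasDerivAt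
            have h2 := hasDerivAt_iff_tendsto_slope.mp h1
            have h3 : 𝓝[>] (0:ℝ) ≤ 𝓝[≠] (0:ℝ) :=
              nhdsWithin_mono _ (fun x hx => ne_of_gt hx)
            refine (h2.mono_left h3).congr ?_
            intro r
            simp [slope_def_field, hdy0, div_eq_mul_inv]
          have htrip : Tendsto (fun r : ℝ => (y r / r, (deriv y r / r, r)))
              (𝓝[>] (0:ℝ)) (𝓝 (deriv y 0, (deriv (deriv y) 0, 0))) :=
            hs.prodMk_nhds (hs2.prodMk_nhds hid)
          constructor
          · -- G limit
            have hψ : Continuous (fun p : ℝ × ℝ =>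
                (-2*k) * (p.1 * deriv y p.2 * Real.exp (φ p.2))) := by
              have := cdy
              have := cφ
              fun_prop
            have ht := (hψ.tendsto (deriv y 0, 0)).comp hsr
            have hval : (-2*k) * (deriv y 0 * deriv y 0 * Real.exp (φ 0)) = 0 := by
              rw [hdy0]; ring
            rw [hval] at ht
            refine ht.congr' ?_
            filter_upwards [self_mem_nhdsWithin] with r hr
            have hr0 : (r:ℝ) ≠ 0 := ne_of_gt hr
            rw [hG]
            simp only [Function.comp]
            rw [show ((n:ℤ)-3) = -1 by omega, zpow_neg_one]
            field_simp
          · -- h limit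
            refine ⟨(-2*k) * ((deriv y 0 * deriv (deriv y) 0 + deriv y 0 * deriv (deriv y) 0
                + deriv φ 0 * (deriv y 0 * deriv y 0))
                + (-1:ℝ) * (deriv y 0 * deriv (deriv y) 0)) * Real.exp (φ 0), ?_⟩
            have hψ : Continuous (fun p : ℝ × (ℝ × ℝ) =>
                (-2*k) * ((deriv y p.2.2 * p.2.1 + p.1 * deriv (deriv y) p.2.2
                  + deriv φ p.2.2 * (p.1 * deriv y p.2.2))
                  + (-1:ℝ) * (p.1 * p.2.1)) * Real.exp (φ p.2.2)) := by
              have := cdy; have := cddy; have := cdφ; have := cφ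
              fun_prop
            have ht := (hψ.tendsto (deriv y 0, (deriv (deriv y) 0, 0))).comp htrip
            refine Tendsto.congr' ?_ (by convert ht using 2)
            filter_upwards [self_mem_nhdsWithin] with r hr
            have hr0 : (r:ℝ) ≠ 0 := ne_of_gt hr
            have hz1 : r ^ (-1:ℤ) = r⁻¹ := zpow_neg_one r
            have hz2 : r ^ (-2:ℤ) = (r^2)⁻¹ := by
              rw [show ((-2:ℤ)) = -(2:ℕ) by norm_num, zpow_neg, zpow_natCast]
            simp only [Function.comp, hh, show ((n:ℤ)-3) = -1 from by omega,
              show ((n:ℤ)-4) = -2 from by omega,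
              show ((n:ℝ)-3) = -1 from by rw [hn2]; norm_num, hz1, hz2]
            field_simp
        · -- n ≥ 3
          have epow3 : ∀ s : ℝ, s ^ ((n:ℤ)-3) = s ^ (n-3:ℕ) := fun s => by
            rw [show ((n:ℤ)-3) = ((n-3:ℕ):ℤ) by omega, zpow_natCast]
          constructor
          · have hGcont : Continuous (fun r : ℝ =>
                (-2*k) * (y r * deriv y r * Real.exp (φ r) * r ^ (n-3:ℕ))) := by
              have := cy; have := cdy; have := cφ
              fun_prop
            have ht := (hGcont.tendsto 0).mono_left (nhdsWithin_le_nhds : 𝓝[>] (0:ℝ) ≤ 𝓝 0)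
            have hval : (-2*k) * (y 0 * deriv y 0 * Real.exp (φ 0) * (0:ℝ) ^ (n-3:ℕ)) = 0 := by
              rw [hy0]; ring
            rw [hval] at ht
            refine ht.congr fun r => ?_
            simp only [hG, epow3 r]
          · refine ⟨(-2*k) * (((deriv y 0)^2 + y 0 * deriv (deriv y) 0
                + deriv φ 0 * (y 0 * deriv y 0)) * (0:ℝ) ^ (n-3:ℕ)
                + ((n:ℝ)-3) * (deriv y 0 * deriv y 0) * (0:ℝ) ^ (n-3:ℕ)) * Real.exp (φ 0), ?_⟩
            have hψ : Continuous (fun p : ℝ × ℝ =>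
                (-2*k) * (((deriv y p.2)^2 + y p.2 * deriv (deriv y) p.2
                  + deriv φ p.2 * (y p.2 * deriv y p.2)) * p.2 ^ (n-3:ℕ)
                  + ((n:ℝ)-3) * (p.1 * deriv y p.2) * p.2 ^ (n-3:ℕ)) * Real.exp (φ p.2)) := by
              have := cy; have := cdy; have := cddy; have := cdφ; have := cφ
              fun_prop
            have ht := (hψ.tendsto (deriv y 0, 0)).comp hsr
            refine Tendsto.congr' ?_ ht
            filter_upwards [self_mem_nhdsWithin] with r hr
            have hr0 : (r:ℝ) ≠ 0 := ne_of_gt hr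
            have e4 : r ^ ((n:ℤ)-4) = r ^ (n-3:ℕ) / r := by
              rw [show ((n:ℤ)-4) = ((n-3:ℕ):ℤ) + (-1) by omega, zpow_add₀ hr0, zpow_natCast,
                zpow_neg_one, div_eq_mul_inv]
            simp only [Function.comp, hh, epow3 r, e4]
            field_simp
      obtain ⟨hGtend, L, hhtend⟩ := hlim
      -- integrability of h on (0, R]
      have hbd : ∀ᶠ r in 𝓝[>] (0:ℝ), ‖h r‖ ≤ ‖L‖ + 1 := by
        filter_upwards [Tendsto.eventually_lt_const (lt_add_one ‖L‖) hhtend.norm] with r hr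
        exact le_of_lt hr
      obtain ⟨u, hu, hsub⟩ := mem_nhdsGT_iff_exists_Ioo_subset.mp hbd
      have hu0 : (0:ℝ) < u := hu
      have i1 : IntegrableOn h (Ioo 0 u) := by
        have hmeas : AEStronglyMeasurable h (volume.restrict (Ioo (0:ℝ) u)) :=
          (hcont.mono (fun x hx => hx.1)).aestronglyMeasurable measurableSet_Ioo
        refine Integrable.mono' (g := fun _ => ‖L‖ + 1) ?_ hmeas ?_
        · exact integrableOn_const measure_Ioo_lt_top.ne
        · filter_upwards [ae_restrict_mem measurableSet_Ioo] with r hr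
          exact hsub hr
      have i2 : IntegrableOn h (Icc (u/2) R) := by
        refine (hcont.mono ?_).integrableOn_Icc
        intro x hx
        exact lt_of_lt_of_le (half_pos hu0) hx.1
      have hIoc : IntegrableOn h (Ioc 0 R) := by
        refine (i1.union i2).mono_set ?_
        intro r hr
        rcases lt_or_ge r u with hru | hru
        · exact Or.inl ⟨hr.1, hru⟩
        · exact Or.inr ⟨le_trans (by linarith) hru, hr.2⟩
      -- limit of G at R from the left
      have hGR : Tendsto G (𝓝[<] R) (𝓝 0) := by
        have hR0 : (R:ℝ) ≠ 0 := ne_of_gt hR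
        have c1 : ContinuousAt (fun s : ℝ => s ^ ((n:ℤ)-3)) R :=
          continuousAt_zpow₀ _ _ (Or.inl hR0)
        have hcG : ContinuousAt G R := by
          rw [hG]
          exact continuousAt_const.mul
            (((cy.continuousAt.mul cdy.continuousAt).mul
              (Real.continuous_exp.continuousAt.comp cφ.continuousAt)).mul c1)
        have h2 : Tendsto G (𝓝[<] R) (𝓝 (G R)) := hcG.continuousWithinAt.tendsto
        have h3 : G R = 0 := by rw [hG]; simp [hyR]
        rwa [h3] at h2
      -- FTC
      have hint : IntervalIntegrable h volume 0 R := by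
        rw [intervalIntegrable_iff_integrableOn_Ioc_of_le hR.le]
        exact hIoc
      have hFTC := intervalIntegral.integral_eq_sub_of_hasDerivAt_of_tendsto hR hGderiv hint
        hGtend hGR
      have hzero : ∫ r in Ioo (0:ℝ) R, h r = 0 := by
        rw [intervalIntegral.integral_of_le hR.le, integral_Ioc_eq_integral_Ioo] at hFTC
        simpa using hFTC
      rw [setIntegral_congr_fun measurableSet_Ioo (fun r hr => key r hr)]
      exact aux_integral_add (hIoc.mono_set Ioo_subset_Ioc_self) hzero
end
end

section
/- If b ≥ a, then the Kummer function z ↦ M(a,b,z) has no zeros on the negative real axis; equivalently, M(a,b,z) > 0 for all z < 0 when b ≥ a and b > 0. -/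
/-!
Kummer's transformation `M(a,b,z) = e^z M(b-a,b,-z)` moves the problem to `M(b-a,b,-z)` with
`b - a ≥ 0` and `-z > 0`, a series of nonnegative terms with constant term `1`. The
transformation itself is the Cauchy product of the series of `e^z` and `M(b-a,b,-z)`: its `n`-th
coefficient is the Chu–Vandermonde sum `∑ (-1)^j C(n,j) (b-a)_j / (b)_j = (a)_n / (b)_n`, a
disguised form of the Vandermonde identity for falling factorials.
-/

open MeasureTheory Real Set

noncomputable section

/-- The Kummer confluent hypergeometric function `M(a,b,z)`. -/
def kummerM (a b z : ℝ) : ℝ :=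
  ∑' k : ℕ, ((ascPochhammer ℝ k).eval a / ((ascPochhammer ℝ k).eval b * (Nat.factorial k))) * z ^ k

open Finset Polynomial Nat

lemma ascPochhammer_eval_nonneg {S : Type*} [Semiring S] [PartialOrder S] [IsOrderedRing S]
    {c : S} (hc : 0 ≤ c) (n : ℕ) : 0 ≤ (ascPochhammer S n).eval c := by
  induction n with
  | zero => simp
  | succ n ih => rw [ascPochhammer_succ_eval]; positivity

theorem ascPochhammer_add_eval {R : Type*} [CommSemiring R] (b : R) (m n : ℕ) :
    (ascPochhammer R (m + n)).eval b =
      (ascPochhammer R m).eval b * (ascPochhammer R n).eval (b + m) := by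
  rw [← ascPochhammer_mul, eval_mul, eval_comp, eval_add, eval_X, eval_natCast]

theorem descPochhammer_eval_add {R : Type*} [CommRing R] (r s : R) (n : ℕ) :
    (descPochhammer R n).eval (r + s) = ∑ ij ∈ antidiagonal n,
      n.choose ij.1 * ((descPochhammer R ij.1).eval r * (descPochhammer R ij.2).eval s) := by
  have smeval_eq (x : R) (k : ℕ) :
      (descPochhammer ℤ k).smeval x = (descPochhammer R k).eval x := by
    rw [← descPochhammer_map (algebraMap ℤ R), eval_map, ← aeval_def, aeval_eq_smeval]
  simpa only [smeval_eq] using Ring.descPochhammer_smeval_add n (Commute.all r s)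

theorem descPochhammer_eval_neg {R : Type*} [CommRing R] (c : R) (n : ℕ) :
    (descPochhammer R n).eval (-c) = (-1) ^ n * (ascPochhammer R n).eval c := by
  rw [← neg_neg c, ascPochhammer_eval_neg_eq_descPochhammer, neg_neg, ← mul_assoc, ← mul_pow,
    neg_one_mul, neg_neg, one_pow, one_mul]

theorem ascPochhammer_eval_sub_eq_sum {R : Type*} [CommRing R] (b c : R) (n : ℕ) :
    (ascPochhammer R n).eval (b - c) = ∑ ij ∈ antidiagonal n,
      n.choose ij.2 * (-1) ^ ij.2 * (ascPochhammer R ij.2).eval c *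
        (ascPochhammer R ij.1).eval (b + ij.2) := by
  -- `(b - c)_n` is the falling factorial of `(b + n - 1) + (-c)`
  have h := descPochhammer_eval_add (b + n - 1) (-c) n
  rw [descPochhammer_eval_eq_ascPochhammer, show b + n - 1 + -c - n + 1 = b - c by ring] at h
  rw [h]
  refine sum_congr rfl fun ij hij => ?_
  rw [HasAntidiagonal.mem_antidiagonal] at hij
  rw [descPochhammer_eval_neg, descPochhammer_eval_eq_ascPochhammer,
    Nat.choose_symm_of_eq_add hij.symm,
    show b + n - 1 - ij.1 + 1 = b + ij.2 by rw [← hij]; push_cast; ring]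
  ring

def kummerCoeff (a b : ℝ) (n : ℕ) : ℝ :=
  (ascPochhammer ℝ n).eval a / ((ascPochhammer ℝ n).eval b * n !)

lemma kummerM_eq_tsum (a b z : ℝ) : kummerM a b z = ∑' n, kummerCoeff a b n * z ^ n := rfl

lemma kummerCoeff_succ {b : ℝ} (hb : 0 < b) (a : ℝ) (n : ℕ) :
    kummerCoeff a b (n + 1) = kummerCoeff a b n * ((a + n) / ((b + n) * (n + 1))) := by
  have := ascPochhammer_pos n b hb
  have : 0 < b + n := by positivity
  simp only [kummerCoeff, ascPochhammer_succ_eval, factorial_succ]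
  push_cast
  field_simp

lemma kummerCoeff_nonneg {b c : ℝ} (hb : 0 ≤ b) (hc : 0 ≤ c) (n : ℕ) : 0 ≤ kummerCoeff c b n := by
  have := ascPochhammer_eval_nonneg hb n
  have := ascPochhammer_eval_nonneg hc n
  unfold kummerCoeff
  positivity

lemma summable_norm_kummerCoeff_mul_pow {b : ℝ} (hb : 0 < b) (a z : ℝ) :
    Summable fun n => ‖kummerCoeff a b n * z ^ n‖ := by
  refine summable_of_ratio_norm_eventually_le (r := 1 / 2) (by norm_num) ?_
  filter_upwards [Filter.eventually_ge_atTop ⌈|a|⌉₊, Filter.eventually_ge_atTop ⌈4 * |z|⌉₊]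
    with n hna hnz
  have hna : |a| ≤ n := ceil_le.mp hna
  have hnz : 4 * |z| ≤ n := ceil_le.mp hnz
  have hbn : 0 < b + n := by positivity
  have hratio : |a + n| * |z| ≤ 1 / 2 * ((b + n) * (n + 1)) := by
    have := abs_add_le a n
    rw [Nat.abs_cast] at this
    nlinarith [abs_nonneg z, abs_nonneg a]
  rw [norm_norm, norm_norm, kummerCoeff_succ hb, pow_succ, mul_mul_mul_comm, norm_mul,
    mul_comm (1 / 2 : ℝ)]
  refine mul_le_mul_of_nonneg_left ?_ (norm_nonneg _)
  rw [Real.norm_eq_abs, abs_mul, abs_div, abs_of_pos (by positivity : (0 : ℝ) < (b + n) * (n + 1)),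
    div_mul_eq_mul_div, div_le_iff₀ (by positivity)]
  exact hratio

lemma sum_antidiagonal_exp_mul_kummerCoeff {b : ℝ} (hb : 0 < b) (c z : ℝ) (n : ℕ) :
    ∑ ij ∈ antidiagonal n, z ^ ij.1 / ij.1 ! * (kummerCoeff c b ij.2 * (-z) ^ ij.2) =
      kummerCoeff (b - c) b n * z ^ n := by
  rw [kummerCoeff, ascPochhammer_eval_sub_eq_sum, sum_div, sum_mul]
  refine sum_congr rfl fun ij hij => ?_
  obtain ⟨i, j⟩ := ij
  obtain rfl : n = i + j := (HasAntidiagonal.mem_antidiagonal.mp hij).symm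
  have hbj := ascPochhammer_pos j b hb
  have hbi := ascPochhammer_pos i (b + j) (by positivity)
  have hchoose : ((i + j).choose j : ℝ) ≠ 0 := by exact_mod_cast (choose_pos (by omega)).ne'
  rw [kummerCoeff, add_comm i j, ascPochhammer_add_eval, add_comm j i,
    ← add_choose_mul_factorial_mul_factorial i j, neg_pow]
  push_cast
  field_simp
  ring

theorem kummerM_eq_exp_mul_kummerM {b : ℝ} (hb : 0 < b) (a z : ℝ) :
    kummerM a b z = exp z * kummerM (b - a) b (-z) := by
  rw [exp_eq_exp_ℝ, NormedSpace.exp_eq_tsum_div, kummerM_eq_tsum, kummerM_eq_tsum,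
    tsum_mul_tsum_eq_tsum_sum_antidiagonal_of_summable_norm
      (NormedSpace.norm_expSeries_div_summable z) (summable_norm_kummerCoeff_mul_pow hb _ _)]
  simp only [sum_antidiagonal_exp_mul_kummerCoeff hb, sub_sub_cancel]

lemma one_le_kummerM {b c w : ℝ} (hb : 0 < b) (hc : 0 ≤ c) (hw : 0 ≤ w) : 1 ≤ kummerM c b w := by
  have := (summable_norm_kummerCoeff_mul_pow hb c w).of_norm.le_tsum 0
    fun n _ => mul_nonneg (kummerCoeff_nonneg hb.le hc n) (pow_nonneg hw n)
  simpa [kummerM_eq_tsum, kummerCoeff] using this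

/-- if `b ≥ a` and `b > 0`, then `M(a,b,z) > 0` for all `z < 0`;
in particular `M(a,b,·)` has no zeros on the negative real axis. -/
theorem stmt10 (a b : ℝ) (hb : 0 < b) (hab : a ≤ b) :
    ∀ z : ℝ, z < 0 → 0 < kummerM a b z := by
  intro z hz
  rw [kummerM_eq_exp_mul_kummerM hb]
  exact mul_pos (exp_pos z)
    (one_pos.trans_le (one_le_kummerM hb (sub_nonneg.mpr hab) (neg_nonneg.mpr hz.le)))
end
end
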